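/- (Example 4.1, Maxwell left kernel.) Let R = MvPolynomial (Fin 4) ℝ with variables dx = X 0, dy = X 1, dz = X 2, dt = X 3, and let A (8×10) and B (10×4) be the matrices over R defined as follows. Rows of A: (0, −dz, dy, dt, 0, 0, 0, 0, 0, 0); (dz, 0, −dx, 0, dt, 0, 0, 0, 0, 0); (−dy, dx, 0, 0, 0, dt, 0, 0, 0, 0); (0, 0, 0, dx, dy, dz, 0, 0, 0, 0); (−dt, 0, 0, 0, −dz, dy, −1, 0, 0, 0); (0, −dt, 0, dz, 0, −dx, 0, −1, 0, 0); (0, 0, −dt, −dy, dx, 0, 0, 0, −1, 0); (dx, dy, dz, 0, 0, 0, 0, 0, 0, −1). Rows of B: (dx, dt, 0, 0); (dy, 0, dt, 0); (dz, 0, 0, dt); (0, 0, dz, −dy); (0, −dz, 0, dx); (0, dy, −dx, 0); (−dt·dx, dy²+dz²−dt², −dy·dx, −dz·dx); (−dt·dy, −dy·dx, dx²+dz²−dt², −dz·dy); (−dt·dz, −dz·dx, −dz·dy, dx²+dy²−dt²); (dx²+dy²+dz², dt·dx, dt·dy, dt·dz). Then the kernel of the R-linear map R¹⁰ → R⁴,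 w ↦ Matrix.vecMul w B, equals the R-submodule of R¹⁰ generated by the eight rows of A. -/

import Mathlib

open MvPolynomial Matrix

noncomputable section

/-- The operator symbol `∂ₓ`. -/
def dx : MvPolynomial (Fin 4) ℝ := X 0
/-- The operator symbol `∂_y`. -/
def dy : MvPolynomial (Fin 4) ℝ := X 1
/-- The operator symbol `∂_z`. -/
def dz : MvPolynomial (Fin 4) ℝ := X 2
/-- The operator symbol `∂_t`. -/
def dt : MvPolynomial (Fin 4) ℝ := X 3

/-- The operator matrix of the inhomogeneous Maxwell equations (all constants set to 1). -/
def maxwellA : Matrix (Fin 8) (Fin 10) (MvPolynomial (Fin 4) ℝ) :=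
  !![0, -dz, dy, dt, 0, 0, 0, 0, 0, 0;
     dz, 0, -dx, 0, dt, 0, 0, 0, 0, 0;
     -dy, dx, 0, 0, 0, dt, 0, 0, 0, 0;
     0, 0, 0, dx, dy, dz, 0, 0, 0, 0;
     -dt, 0, 0, 0, -dz, dy, -1, 0, 0, 0;
     0, -dt, 0, dz, 0, -dx, 0, -1, 0, 0;
     0, 0, -dt, -dy, dx, 0, 0, 0, -1, 0;
     dx, dy, dz, 0, 0, 0, 0, 0, 0, -1]

/-- The parametrization of Maxwell's equations by the electric and magnetic potentials. -/
def maxwellB : Matrix (Fin 10) (Fin 4) (MvPolynomial (Fin 4) ℝ) :=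
  !![dx, dt, 0, 0;
     dy, 0, dt, 0;
     dz, 0, 0, dt;
     0, 0, dz, -dy;
     0, -dz, 0, dx;
     0, dy, -dx, 0;
     -(dt*dx), dy^2+dz^2-dt^2, -(dy*dx), -(dz*dx);
     -(dt*dy), -(dy*dx), dx^2+dz^2-dt^2, -(dz*dy);
     -(dt*dz), -(dz*dx), -(dz*dy), dx^2+dy^2-dt^2;
     dx^2+dy^2+dz^2, dt*dx, dt*dy, dt*dz]

/-!
Adding `w₆, …, w₉` times the last four rows of `A` (whose last four columns form `-1`) reduces
a kernel vector `w` to its first six coordinates, read as a pair `(E, B)` with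
`∂ₜ E + ∇ × B = 0`. Setting `∂ₜ = 0` kills the first term, so the `∂ₜ`-free part of `B` is
curl-free and hence equal to `φ ∇`, because `∂ₓ` is prime and does not divide `∂_y`. Writing
the rest of `B` as `∂ₜ A'`, the relation becomes `∂ₜ (E + ∇ × A') = 0`, so `E = -∇ × A'`, and
`(A', φ)` are the coefficients of `w` on the first four rows of `A`.
-/

namespace MvPolynomial

theorem X_dvd_sub_aeval_update_zero {σ R : Type*} [CommRing R] [DecidableEq σ] (i : σ)
    (f : MvPolynomial σ R) : X i ∣ f - aeval (Function.update X i 0) f := by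
  rw [← Ideal.mem_span_singleton, ← Ideal.Quotient.eq]
  suffices h : (Ideal.Quotient.mkₐ R (Ideal.span {X i})).comp (aeval (Function.update X i 0)) =
      Ideal.Quotient.mkₐ R _ from (DFunLike.congr_fun h f).symm
  refine algHom_ext fun j => ?_
  rcases eq_or_ne j i with rfl | hj
  · simp
  · simp [hj]

end MvPolynomial

theorem exists_eq_smul_of_cross_eq_zero {S : Type*} [CommRing S] [IsDomain S] {v B : Fin 3 → S}
    (hv : Prime (v 0)) (hv01 : ¬ v 0 ∣ v 1) (h : v ⨯₃ B = 0) : ∃ φ : S, B = φ • v := by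
  have h2 : v 0 * B 1 = v 1 * B 0 := sub_eq_zero.mp (by simpa [cross_apply] using congrFun h 2)
  have h1 : v 2 * B 0 = v 0 * B 2 := sub_eq_zero.mp (by simpa [cross_apply] using congrFun h 1)
  obtain ⟨φ, hφ⟩ : v 0 ∣ B 0 := (hv.dvd_or_dvd ⟨B 1, h2.symm⟩).resolve_left hv01
  refine ⟨φ, funext fun i => mul_left_cancel₀ hv.ne_zero ?_⟩
  fin_cases i <;>
    simp only [Fin.zero_eta, Fin.mk_one, Fin.reduceFinMk, Pi.smul_apply, smul_eq_mul]
  · linear_combination v 0 * hφ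
  · linear_combination h2 + v 1 * hφ
  · linear_combination -h1 + v 2 * hφ

/-- The spatial part `(∂ₓ, ∂_y, ∂_z)` of the symbol of the gradient; `X 3` stands for `∂ₜ`. -/
def nabla (R : Type*) [CommRing R] : Fin 3 → MvPolynomial (Fin 4) R :=
  ![(X 0 : MvPolynomial (Fin 4) R), X 1, X 2]

theorem exists_potentials_of_smul_add_cross_eq_zero {R : Type*} [CommRing R] [IsDomain R]
    {E B : Fin 3 → MvPolynomial (Fin 4) R}
    (h : (X 3 : MvPolynomial (Fin 4) R) • E + nabla R ⨯₃ B = 0) :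
    ∃ (A : Fin 3 → MvPolynomial (Fin 4) R) (φ : MvPolynomial (Fin 4) R),
      E = -(nabla R ⨯₃ A) ∧ B = (X 3 : MvPolynomial (Fin 4) R) • A + φ • nabla R := by
  set π : MvPolynomial (Fin 4) R →ₐ[R] MvPolynomial (Fin 4) R := aeval (Function.update X 3 0)
  choose A hA using fun i => X_dvd_sub_aeval_update_zero 3 (B i)
  have hcurl : nabla R ⨯₃ (fun i => π (B i)) = 0 := by
    funext i
    have hi := congrArg π (congrFun h i)
    fin_cases i <;> simpa [cross_apply, π, nabla] using hi
  obtain ⟨φ, hφ⟩ := exists_eq_smul_of_cross_eq_zero (by simpa [nabla] using X_prime)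
    (by simp [nabla, X_dvd_X]) hcurl
  have hB : B = (X 3 : MvPolynomial (Fin 4) R) • A + φ • nabla R := funext fun i => by
    have hπB := congrFun hφ i
    simp only [Pi.add_apply, Pi.smul_apply, smul_eq_mul] at hπB ⊢
    linear_combination hA i + hπB
  refine ⟨A, φ, ?_, hB⟩
  have hE : (X 3 : MvPolynomial (Fin 4) R) • (E + nabla R ⨯₃ A) = 0 := by
    rw [← h, hB, map_add, map_smul, map_smul, cross_self, smul_zero, add_zero, smul_add]
  exact eq_neg_of_add_eq_zero_left ((smul_eq_zero.mp hE).resolve_left (X_ne_zero 3))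

theorem maxwellA_mul_maxwellB : maxwellA * maxwellB = 0 := by
  ext i k : 1
  fin_cases i <;> fin_cases k <;>
    simp [mul_apply, Fin.sum_univ_succ, maxwellA, maxwellB] <;> ring

/-- Example 4.1, Maxwell left kernel: the left kernel of the potential matrix `B` is
generated by the eight rows of the Maxwell operator matrix `A`. -/
theorem maxwell_left_kernel :
    LinearMap.ker maxwellB.vecMulLinear =
      Submodule.span (MvPolynomial (Fin 4) ℝ)
        (Set.range fun i : Fin 8 => fun j : Fin 10 => maxwellA i j) := by
  refine le_antisymm (fun w hw => ?_) (Submodule.span_le.mpr ?_)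
  · obtain ⟨a, φ, hE, hB⟩ := exists_potentials_of_smul_add_cross_eq_zero
      (E := ![w 0 - w 6 * dt + w 9 * dx, w 1 - w 7 * dt + w 9 * dy, w 2 - w 8 * dt + w 9 * dz])
      (B := ![w 3 + w 7 * dz - w 8 * dy, w 4 - w 6 * dz + w 8 * dx, w 5 + w 6 * dy - w 7 * dx])
      (by
        funext k
        have hk := congrFun hw k.succ
        fin_cases k <;>
          simp [vecMul, dotProduct, Fin.sum_univ_succ, maxwellB, cross_apply, nabla,
            dx, dy, dz, dt] at hk ⊢ <;>
          linear_combination hk)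
    refine (Submodule.mem_span_range_iff_exists_fun _).mpr
      ⟨![a 0, a 1, a 2, φ, -w 6, -w 7, -w 8, -w 9], funext fun j => ?_⟩
    simp only [funext_iff, Fin.forall_fin_succ, IsEmpty.forall_iff, and_true] at hE hB
    obtain ⟨hE0, hE1, hE2⟩ := hE
    obtain ⟨hB0, hB1, hB2⟩ := hB
    fin_cases j <;> simp [Fin.sum_univ_succ, maxwellA, cross_apply, nabla, dx, dy, dz, dt]
      at hE0 hE1 hE2 hB0 hB1 hB2 ⊢
    · linear_combination -hE0
    · linear_combination -hE1
    · linear_combination -hE2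
    · linear_combination -hB0
    · linear_combination -hB1
    · linear_combination -hB2
  · rintro _ ⟨i, rfl⟩
    exact congrFun maxwellA_mul_maxwellB i

end
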